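/- Suppose that (G,m) is a ℤ²⋊Cs-tight gain graph that has a vertex v₀ of degree 3 with exactly 2 distinct neighbours, both different from v₀. Then it is possible to form a ℤ²⋊Cs-tight gain graph by a gained 1-reduction at v₀. -/

import Mathlib

namespace Crystal

/-- The wallpaper group `pm = ℤ² ⋊ 𝒞ₛ`.  An element is a pair of a translation
vector `t ∈ ℤ²` and a Boolean `r` recording the `𝒞ₛ`-component
(`true` = the reflection `s` in the x-axis). -/
@[ext] structure PM : Type where
  t : ℤ × ℤ
  r : Bool

namespace PM

/-- The action of the reflection component on translation vectors. -/
def act (σ : Bool) (z : ℤ × ℤ) : ℤ × ℤ := (z.1, if σ then -z.2 else z.2)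

instance : Mul PM := ⟨fun a b => ⟨a.t + act a.r b.t, xor a.r b.r⟩⟩
instance : One PM := ⟨⟨0, false⟩⟩
instance : Inv PM := ⟨fun a => ⟨act a.r (-a.t), a.r⟩⟩

lemma mul_def (a b : PM) : a * b = ⟨a.t + act a.r b.t, xor a.r b.r⟩ := rfl
lemma one_def : (1 : PM) = ⟨0, false⟩ := rfl
lemma inv_def (a : PM) : a⁻¹ = ⟨act a.r (-a.t), a.r⟩ := rfl

instance : Group PM where
  mul_assoc a b c := by
    obtain ⟨⟨x1, x2⟩, ra⟩ := a
    obtain ⟨⟨y1, y2⟩, rb⟩ := b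
    obtain ⟨⟨z1, z2⟩, rc⟩ := c
    cases ra <;> cases rb <;> cases rc <;>
      simp [mul_def, act, Prod.ext_iff] <;> omega
  one_mul a := by
    obtain ⟨⟨x1, x2⟩, ra⟩ := a
    cases ra <;> simp [mul_def, one_def, act]
  mul_one a := by
    obtain ⟨⟨x1, x2⟩, ra⟩ := a
    cases ra <;> simp [mul_def, one_def, act]
  inv_mul_cancel a := by
    obtain ⟨⟨x1, x2⟩, ra⟩ := a
    cases ra <;> simp [mul_def, one_def, inv_def, act, Prod.ext_iff]

/-- The affine action of `pm` on the plane: `(z,σ)·x = σ(x) + z`. -/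
noncomputable def toPlane (g : PM) (x : ℝ × ℝ) : ℝ × ℝ :=
  (x.1 + (g.t.1 : ℝ), (if g.r then -x.2 else x.2) + (g.t.2 : ℝ))

end PM

/-- A multigraph: a finite vertex set, a finite edge set, and two endpoint maps
(which also fix a reference orientation of every edge, from `fst` to `snd`).
Loops and parallel edges are allowed. -/
structure Multigraph (α β : Type) where
  verts : Finset α
  edges : Finset β
  fst : β → α
  snd : β → α
  fst_mem : ∀ e ∈ edges, fst e ∈ verts
  snd_mem : ∀ e ∈ edges, snd e ∈ verts

variable {α β : Type}

/-- `H` is a subgraph of `G`. -/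
def IsSubgraph (H G : Multigraph α β) : Prop :=
  H.verts ⊆ G.verts ∧ H.edges ⊆ G.edges ∧
    ∀ e ∈ H.edges, H.fst e = G.fst e ∧ H.snd e = G.snd e

/-- `(k,l)`-sparsity. -/
def Sparse (k l : ℕ) (G : Multigraph α β) : Prop :=
  ∀ H : Multigraph α β, IsSubgraph H G → 1 ≤ H.edges.card →
    (H.edges.card : ℤ) ≤ k * H.verts.card - l

/-- `(k,l)`-tightness. -/
def Tight (k l : ℕ) (G : Multigraph α β) : Prop :=
  Sparse k l G ∧ (G.edges.card : ℤ) = k * G.verts.card - l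

/-- The degree of a vertex: the number of edge-incidences, loops counting twice. -/
def Multigraph.degree [DecidableEq α] (G : Multigraph α β) (v : α) : ℕ :=
  ∑ e ∈ G.edges, ((if G.fst e = v then 1 else 0) + (if G.snd e = v then 1 else 0))

/-- The starting vertex of a step `(e, dir)` of a walk: `dir = true` means the
edge is traversed forwards. -/
def stepHead (G : Multigraph α β) (s : β × Bool) : α := if s.2 then G.fst s.1 else G.snd s.1

/-- The final vertex of a step of a walk. -/
def stepTail (G : Multigraph α β) (s : β × Bool) : α := if s.2 then G.snd s.1 else G.fst s.1

/-- `IsWalk G u v L` : `L` is a walk in `G` from `u` to `v`. -/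
def IsWalk (G : Multigraph α β) : α → α → List (β × Bool) → Prop
  | u, v, [] => u = v
  | u, v, s :: L => s.1 ∈ G.edges ∧ stepHead G s = u ∧ IsWalk G (stepTail G s) v L

/-- The net gain of a walk. -/
def walkGain (m : β → PM) (L : List (β × Bool)) : PM :=
  (L.map fun s => if s.2 then m s.1 else (m s.1)⁻¹).prod

/-- A gain graph is balanced if every closed walk has identity net gain. -/
def Balanced (G : Multigraph α β) (m : β → PM) : Prop :=
  ∀ u L, IsWalk G u u L → walkGain m L = 1

/-- A gain graph is purely periodic if every closed walk has net gain in the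
translation subgroup `ℤ²`. -/
def PurelyPeriodic (G : Multigraph α β) (m : β → PM) : Prop :=
  ∀ u L, IsWalk G u u L → (walkGain m L).r = false

/-- A multigraph is connected if every pair of its vertices is joined by a walk. -/
def Connected (G : Multigraph α β) : Prop :=
  ∀ u ∈ G.verts, ∀ v ∈ G.verts, ∃ L, IsWalk G u v L

/-- The conditions for `m` to be a gain assignment on `G`: parallel edges with the
same orientation get distinct gains, and loops get non-identity gains. -/
structure IsGainGraph (G : Multigraph α β) (m : β → PM) : Prop where
  parallel_ne : ∀ e ∈ G.edges, ∀ f ∈ G.edges,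
    e ≠ f → G.fst e = G.fst f → G.snd e = G.snd f → m e ≠ m f
  loop_ne_one : ∀ e ∈ G.edges, G.fst e = G.snd e → m e ≠ 1

/-- `ℤ²⋊𝒞ₛ`-tightness of a gain graph. -/
def PMTight (G : Multigraph α β) (m : β → PM) : Prop :=
  Tight 2 1 G ∧
    (∀ H : Multigraph α β, IsSubgraph H G → PurelyPeriodic H m → Sparse 2 2 H) ∧
    (∀ H : Multigraph α β, IsSubgraph H G → Balanced H m → Sparse 2 3 H)

/-- The orbit rigidity matrix of a `ℤ²⋊𝒞ₛ`-gain framework. -/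
noncomputable def orbitMatrix [DecidableEq α] (G : Multigraph α β) (m : β → PM)
    (p : α → ℝ × ℝ) :
    Matrix {e : β // e ∈ G.edges} ({v : α // v ∈ G.verts} × Fin 2) ℝ :=
  fun er vc =>
    let e : β := er.1
    let i : α := G.fst e
    let j : α := G.snd e
    let w : α := vc.1.1
    let entry : ℝ × ℝ :=
      if i = j then
        (if w = i then p i + p i - PM.toPlane (m e) (p i) - PM.toPlane (m e)⁻¹ (p i) else 0)
      else if w = i then p i - PM.toPlane (m e) (p j)
      else if w = j then p j - PM.toPlane (m e)⁻¹ (p i)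
      else 0
    if vc.2 = 0 then entry.1 else entry.2

/-- A configuration is generic if its orbit rigidity matrix has the maximum
possible rank among all configurations. -/
def Generic [DecidableEq α] (G : Multigraph α β) (m : β → PM) (p : α → ℝ × ℝ) : Prop :=
  ∀ q : α → ℝ × ℝ, (orbitMatrix G m q).rank ≤ (orbitMatrix G m p).rank

/-- A gain graph is rigid if the orbit rigidity matrix of a generic configuration
has rank `2|V| - 1`. -/
def Rigid [DecidableEq α] (G : Multigraph α β) (m : β → PM) : Prop :=
  ∃ p : α → ℝ × ℝ, Generic G m p ∧
    ((orbitMatrix G m p).rank : ℤ) = 2 * G.verts.card - 1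

/-- A gain graph is independent if the rows of the orbit rigidity matrix of a
generic configuration are linearly independent. -/
def Independent [DecidableEq α] (G : Multigraph α β) (m : β → PM) : Prop :=
  ∃ p : α → ℝ × ℝ, Generic G m p ∧
    LinearIndependent ℝ (fun er => orbitMatrix G m p er)

/-- A gain graph is minimally rigid if it is rigid and independent. -/
def MinimallyRigid [DecidableEq α] (G : Multigraph α β) (m : β → PM) : Prop :=
  Rigid G m ∧ Independent G m

/-- `e` joins `u` and `v` (in one of the two orientations). -/
def Joins (G : Multigraph α β) (e : β) (u v : α) : Prop :=
  (G.fst e = u ∧ G.snd e = v) ∨ (G.fst e = v ∧ G.snd e = u)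

/-- The gain of an edge read with `v` as its initial vertex (inverting the gain
if the edge is oriented towards `v`). -/
def gainFrom [DecidableEq α] (G : Multigraph α β) (m : β → PM) (v : α) (e : β) : PM :=
  if G.fst e = v then m e else (m e)⁻¹

/-- The endpoint of an edge other than `v` (for an edge incident with `v`). -/
def otherEnd [DecidableEq α] (G : Multigraph α β) (v : α) (e : β) : α :=
  if G.fst e = v then G.snd e else G.fst e

/-- Deletion of a vertex together with all edges incident with it. -/
def Multigraph.deleteVertex [DecidableEq α] (G : Multigraph α β) (v : α) :
    Multigraph α β where
  verts := G.verts.erase v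
  edges := G.edges.filter fun e => G.fst e ≠ v ∧ G.snd e ≠ v
  fst := G.fst
  snd := G.snd
  fst_mem := fun e he => by
    rw [Finset.mem_filter] at he
    exact Finset.mem_erase.2 ⟨he.2.1, G.fst_mem e he.1⟩
  snd_mem := fun e he => by
    rw [Finset.mem_filter] at he
    exact Finset.mem_erase.2 ⟨he.2.2, G.snd_mem e he.1⟩

/-- Addition of a new edge `f` from `u` to `v`. -/
def Multigraph.addEdge [DecidableEq α] [DecidableEq β] (G : Multigraph α β)
    (f : β) (u v : α) : Multigraph α β where
  verts := insert u (insert v G.verts)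
  edges := insert f G.edges
  fst := Function.update G.fst f u
  snd := Function.update G.snd f v
  fst_mem := fun e he => by
    by_cases hef : e = f
    · subst hef; simp
    · rw [Function.update_of_ne hef]
      have heG : e ∈ G.edges := by
        rcases Finset.mem_insert.1 he with h | h
        · exact absurd h hef
        · exact h
      exact Finset.mem_insert_of_mem (Finset.mem_insert_of_mem (G.fst_mem e heG))
  snd_mem := fun e he => by
    by_cases hef : e = f
    · subst hef; simp
    · rw [Function.update_of_ne hef]
      have heG : e ∈ G.edges := by
        rcases Finset.mem_insert.1 he with h | h
        · exact absurd h hef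
        · exact h
      exact Finset.mem_insert_of_mem (Finset.mem_insert_of_mem (G.snd_mem e heG))

/-- `(G',m')` is obtained from `(G,m)` by a gained 0-extension. -/
def IsZeroExtension [DecidableEq α] [DecidableEq β] (G : Multigraph α β) (m : β → PM)
    (G' : Multigraph α β) (m' : β → PM) : Prop :=
  ∃ v₀ v₁ v₂ f₁ f₂, v₀ ∉ G.verts ∧ v₁ ∈ G.verts ∧ v₂ ∈ G.verts ∧
    f₁ ∉ G.edges ∧ f₂ ∉ G.edges ∧ f₁ ≠ f₂ ∧
    G'.verts = insert v₀ G.verts ∧ G'.edges = insert f₁ (insert f₂ G.edges) ∧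
    (∀ e ∈ G.edges, G'.fst e = G.fst e ∧ G'.snd e = G.snd e ∧ m' e = m e) ∧
    Joins G' f₁ v₀ v₁ ∧ Joins G' f₂ v₀ v₂ ∧
    IsGainGraph G' m'

/-- `(G',m')` is obtained from `(G,m)` by a gained 1-extension. -/
def IsOneExtension [DecidableEq α] [DecidableEq β] (G : Multigraph α β) (m : β → PM)
    (G' : Multigraph α β) (m' : β → PM) : Prop :=
  ∃ v₀ v₃ e f₁ f₂ f₃, v₀ ∉ G.verts ∧ v₃ ∈ G.verts ∧ e ∈ G.edges ∧
    f₁ ∉ G.edges.erase e ∧ f₂ ∉ G.edges.erase e ∧ f₃ ∉ G.edges.erase e ∧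
    f₁ ≠ f₂ ∧ f₁ ≠ f₃ ∧ f₂ ≠ f₃ ∧
    G'.verts = insert v₀ G.verts ∧
    G'.edges = insert f₁ (insert f₂ (insert f₃ (G.edges.erase e))) ∧
    (∀ e' ∈ G.edges.erase e, G'.fst e' = G.fst e' ∧ G'.snd e' = G.snd e' ∧ m' e' = m e') ∧
    Joins G' f₁ v₀ (G.fst e) ∧ Joins G' f₂ v₀ (G.snd e) ∧ Joins G' f₃ v₀ v₃ ∧
    (gainFrom G' m' v₀ f₁)⁻¹ * gainFrom G' m' v₀ f₂ = m e ∧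
    IsGainGraph G' m'

/-- `(G',m')` is obtained from `(G,m)` by a gained loop-1-extension. -/
def IsLoopOneExtension [DecidableEq α] [DecidableEq β] (G : Multigraph α β) (m : β → PM)
    (G' : Multigraph α β) (m' : β → PM) : Prop :=
  ∃ v₀ v₁ l f, v₀ ∉ G.verts ∧ v₁ ∈ G.verts ∧ l ∉ G.edges ∧ f ∉ G.edges ∧ l ≠ f ∧
    G'.verts = insert v₀ G.verts ∧ G'.edges = insert l (insert f G.edges) ∧
    (∀ e ∈ G.edges, G'.fst e = G.fst e ∧ G'.snd e = G.snd e ∧ m' e = m e) ∧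
    G'.fst l = v₀ ∧ G'.snd l = v₀ ∧ (m' l).r = true ∧
    Joins G' f v₀ v₁ ∧ IsGainGraph G' m'

/-- A `ℤ²⋊𝒞ₛ`-tight gain graph on `K₁¹`: a single vertex with a single loop whose
gain has non-trivial `𝒞ₛ`-component. -/
def IsTightK11 (G : Multigraph α β) (m : β → PM) : Prop :=
  ∃ v l, G.verts = {v} ∧ G.edges = {l} ∧ G.fst l = v ∧ G.snd l = v ∧ (m l).r = true

/-!
If none of the three reductions at `v₀` were `ℤ²⋊𝒞ₛ`-tight, each would be blocked by a subgraph
`B` of `G - v₀` through the ends of the new edge that becomes overfull when the edge is added: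
either `B` has `2|V| - 1` edges, or it is purely periodic with `2|V| - 2` edges and its walks
between the two ends have the reflection part of the new gain, or it is balanced with `2|V| - 3`
edges and its walks between the two ends have exactly the new gain. Putting back the star of `v₀`
bounds every subgraph of `G - v₀` through `v₁` and `v₂` by `2|V| - 2` edges, so the blockers `B₁`,
`B₂` of the two reductions joining `v₁` to `v₂` are periodic or balanced.

The blocker `T` of the loop at `v₂` cannot be balanced, since the gains of `e₂` and `e₃` read from
`v₀` differ (otherwise the digon `e₂ e₃` would be balanced with too many edges). If `T` is purely
periodic, then `e₂` and `e₃` have equal reflection parts; counting shows that `B₁ ∪ B₂` has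
`2|V| - 2` edges and that `B₁` and `B₂` induce compatible potentials for the reflection parts, so
`B₁ ∪ B₂` plus the star of `v₀` is purely periodic with too many edges. If `T` has `2|V| - 1`
edges, it meets each of `B₁`, `B₂` only in `v₂` (so both are balanced), and `B₁ ∪ B₂ ∪ T`
contradicts the bound above. Two counting facts are used throughout: the modular law for edges and
vertices of unions and intersections, and that a `(2,2)`-sparse graph with no walk between two of
its vertices has at most `2|V| - 4` edges.
-/

open scoped Finset

namespace PM

@[simp] lemma r_mul (a b : PM) : (a * b).r = xor a.r b.r := rfl
@[simp] lemma r_inv (a : PM) : a⁻¹.r = a.r := rfl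
@[simp] lemma r_one : (1 : PM).r = false := rfl

end PM

lemma gainFrom_r [DecidableEq α] (G : Multigraph α β) (m : β → PM) (v : α) (e : β) :
    (gainFrom G m v e).r = (m e).r := by
  unfold gainFrom
  split_ifs <;> rfl

section Walks

variable {H K : Multigraph α β} {m m' : β → PM} {u v w : α} {L L' : List (β × Bool)}

@[simp] lemma walkGain_nil : walkGain m [] = 1 := rfl

@[simp] lemma walkGain_cons (s : β × Bool) (L : List (β × Bool)) :
    walkGain m (s :: L) = (if s.2 then m s.1 else (m s.1)⁻¹) * walkGain m L := rfl

@[simp] lemma walkGain_append : walkGain m (L ++ L') = walkGain m L * walkGain m L' := by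
  simp [walkGain]

lemma IsWalk.append (h : IsWalk H u v L) (h' : IsWalk H v w L') : IsWalk H u w (L ++ L') := by
  induction L generalizing u with
  | nil => obtain rfl : u = v := h; exact h'
  | cons s L ih => exact ⟨h.1, h.2.1, ih h.2.2⟩

lemma IsWalk.edge_mem (h : IsWalk H u v L) {s : β × Bool} (hs : s ∈ L) : s.1 ∈ H.edges := by
  induction L generalizing u with
  | nil => cases hs
  | cons t L ih =>
    rcases List.mem_cons.1 hs with rfl | hs
    exacts [h.1, ih h.2.2 hs]

lemma isWalk_forward {e : β} (he : e ∈ H.edges) : IsWalk H (H.fst e) (H.snd e) [(e, true)] :=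
  ⟨he, rfl, rfl⟩

lemma isWalk_backward {e : β} (he : e ∈ H.edges) : IsWalk H (H.snd e) (H.fst e) [(e, false)] :=
  ⟨he, rfl, rfl⟩

def walkReverse (L : List (β × Bool)) : List (β × Bool) := (L.map fun s => (s.1, !s.2)).reverse

lemma walkReverse_cons (s : β × Bool) (L : List (β × Bool)) :
    walkReverse (s :: L) = walkReverse L ++ [(s.1, !s.2)] := by
  simp [walkReverse]

lemma IsWalk.reverse (h : IsWalk H u v L) : IsWalk H v u (walkReverse L) := by
  induction L generalizing u with
  | nil => obtain rfl : u = v := h; rfl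
  | cons s L ih =>
    obtain ⟨he, rfl, ht⟩ := h
    rw [walkReverse_cons]
    obtain ⟨e, _ | _⟩ := s
    · exact (ih ht).append (isWalk_forward he)
    · exact (ih ht).append (isWalk_backward he)

@[simp] lemma walkGain_reverse : walkGain m (walkReverse L) = (walkGain m L)⁻¹ := by
  induction L with
  | nil => simp [walkReverse]
  | cons s L ih => obtain ⟨e, _ | _⟩ := s <;> simp_all [walkReverse]

lemma IsWalk.mono (hE : H.edges ⊆ K.edges) (hfst : ∀ e ∈ H.edges, H.fst e = K.fst e)
    (hsnd : ∀ e ∈ H.edges, H.snd e = K.snd e) (h : IsWalk H u v L) : IsWalk K u v L := by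
  induction L generalizing u with
  | nil => exact h
  | cons s L ih =>
    obtain ⟨he, rfl, ht⟩ := h
    obtain ⟨e, _ | _⟩ := s
    · exact ⟨hE he, (hsnd e he).symm, (hfst e he ▸ ih ht : IsWalk K (K.fst e) v L)⟩
    · exact ⟨hE he, (hfst e he).symm, (hsnd e he ▸ ih ht : IsWalk K (K.snd e) v L)⟩

lemma walkGain_congr (h : ∀ s ∈ L, m s.1 = m' s.1) : walkGain m L = walkGain m' L := by
  induction L with
  | nil => rfl
  | cons s L ih => simp [h s (by simp), ih fun t ht => h t (by simp [ht])]

lemma IsWalk.walkGain_eq (hw : IsWalk H u v L) (h : ∀ e ∈ H.edges, m e = m' e) :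
    walkGain m L = walkGain m' L :=
  walkGain_congr fun s hs => h s.1 (hw.edge_mem hs)

lemma PurelyPeriodic.congr (hpp : PurelyPeriodic H m) (h : ∀ e ∈ H.edges, m e = m' e) :
    PurelyPeriodic H m' :=
  fun u L hw => hw.walkGain_eq h ▸ hpp u L hw

lemma Balanced.congr (hb : Balanced H m) (h : ∀ e ∈ H.edges, m e = m' e) : Balanced H m' :=
  fun u L hw => hw.walkGain_eq h ▸ hb u L hw

lemma Balanced.purelyPeriodic (h : Balanced H m) : PurelyPeriodic H m :=
  fun u L hw => by rw [h u L hw]; rfl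

lemma PurelyPeriodic.walkGain_r_eq (h : PurelyPeriodic H m) (hw : IsWalk H u v L)
    (hw' : IsWalk H u v L') : (walkGain m L).r = (walkGain m L').r := by
  simpa using h u _ (hw.append hw'.reverse)

lemma IsSubgraph.refl (H : Multigraph α β) : IsSubgraph H H :=
  ⟨subset_rfl, subset_rfl, fun _ _ => ⟨rfl, rfl⟩⟩

lemma IsSubgraph.trans {M : Multigraph α β} (h : IsSubgraph H K) (h' : IsSubgraph K M) :
    IsSubgraph H M :=
  ⟨h.1.trans h'.1, h.2.1.trans h'.2.1, fun e he =>
    ⟨(h.2.2 e he).1.trans (h'.2.2 e (h.2.1 he)).1,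
      (h.2.2 e he).2.trans (h'.2.2 e (h.2.1 he)).2⟩⟩

lemma IsSubgraph.isWalk (h : IsSubgraph H K) (hw : IsWalk H u v L) : IsWalk K u v L :=
  hw.mono h.2.1 (fun e he => (h.2.2 e he).1) (fun e he => (h.2.2 e he).2)

lemma IsSubgraph.purelyPeriodic (h : IsSubgraph H K) (hK : PurelyPeriodic K m) :
    PurelyPeriodic H m :=
  fun u L hw => hK u L (h.isWalk hw)

lemma IsSubgraph.balanced (h : IsSubgraph H K) (hK : Balanced K m) : Balanced H m :=
  fun u L hw => hK u L (h.isWalk hw)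

lemma IsSubgraph.sparse {k l : ℕ} (h : IsSubgraph H K) (hK : Sparse k l K) : Sparse k l H :=
  fun M hM => hK M (hM.trans h)

lemma Multigraph.isSubgraph_deleteVertex [DecidableEq α] (G : Multigraph α β) (v : α) :
    IsSubgraph (G.deleteVertex v) G :=
  ⟨Finset.erase_subset v G.verts, Finset.filter_subset _ _, fun _ _ => ⟨rfl, rfl⟩⟩

def Multigraph.Reachable (H : Multigraph α β) (u v : α) : Prop := ∃ L, IsWalk H u v L

lemma Multigraph.Reachable.refl (H : Multigraph α β) (u : α) : H.Reachable u u := ⟨[], rfl⟩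

lemma Multigraph.Reachable.mono (h : IsSubgraph H K) : H.Reachable u v → K.Reachable u v :=
  fun ⟨L, hw⟩ => ⟨L, h.isWalk hw⟩

lemma Multigraph.reachable_snd_iff_fst {e : β} (he : e ∈ H.edges) :
    H.Reachable u (H.snd e) ↔ H.Reachable u (H.fst e) :=
  ⟨fun ⟨_, hw⟩ => ⟨_, hw.append (isWalk_backward he)⟩,
    fun ⟨_, hw⟩ => ⟨_, hw.append (isWalk_forward he)⟩⟩

end Walks

section Potentials

variable {H K : Multigraph α β} {m : β → PM} {u v : α} {L : List (β × Bool)} {ρ ρ' : α → Bool}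

/-- Switching by `ρ` turns every gain on `H` into a translation. -/
def IsPotential (H : Multigraph α β) (m : β → PM) (ρ : α → Bool) : Prop :=
  ∀ e ∈ H.edges, (m e).r = xor (ρ (H.fst e)) (ρ (H.snd e))

lemma IsPotential.walkGain_r (hρ : IsPotential H m ρ) (hw : IsWalk H u v L) :
    (walkGain m L).r = xor (ρ u) (ρ v) := by
  induction L generalizing u with
  | nil => obtain rfl : u = v := hw; simp
  | cons s L ih =>
    obtain ⟨he, rfl, ht⟩ := hw
    have hs : (if s.2 then m s.1 else (m s.1)⁻¹).r =
        xor (ρ (stepHead H s)) (ρ (stepTail H s)) := by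
      obtain ⟨e, _ | _⟩ := s <;> simp [stepHead, stepTail, hρ e he, Bool.xor_comm]
    rw [walkGain_cons, PM.r_mul, hs, ih ht]
    cases ρ (stepHead H s) <;> cases ρ (stepTail H s) <;> cases ρ v <;> rfl

lemma IsPotential.purelyPeriodic (hρ : IsPotential H m ρ) : PurelyPeriodic H m :=
  fun u _ hw => by simp [hρ.walkGain_r hw]

lemma IsPotential.eq_of_isWalk (hρ : IsPotential H m ρ) (hρ' : IsPotential H m ρ')
    (hw : IsWalk H u v L) (hu : ρ u = ρ' u) : ρ v = ρ' v := by
  have := (hρ.walkGain_r hw).symm.trans (hρ'.walkGain_r hw)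
  rw [hu] at this
  simpa using this

lemma IsSubgraph.isPotential (h : IsSubgraph H K) (hK : IsPotential K m ρ) :
    IsPotential H m ρ :=
  fun e he => by rw [(h.2.2 e he).1, (h.2.2 e he).2]; exact hK e (h.2.1 he)

lemma PurelyPeriodic.exists_isPotential (hpp : PurelyPeriodic H m)
    (hconn : ∀ v ∈ H.verts, H.Reachable u v) : ∃ ρ, IsPotential H m ρ ∧ ρ u = false := by
  classical
  refine ⟨fun v => if h : ∃ L, IsWalk H u v L then (walkGain m h.choose).r else false, ?_, ?_⟩
  · intro e he
    obtain ⟨L, hL⟩ := hconn _ (H.fst_mem e he)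
    have hL' := hL.append (isWalk_forward he)
    have h₁ : ∃ L, IsWalk H u (H.fst e) L := ⟨L, hL⟩
    have h₂ : ∃ L, IsWalk H u (H.snd e) L := ⟨_, hL'⟩
    dsimp only
    rw [dif_pos h₁, dif_pos h₂, hpp.walkGain_r_eq h₁.choose_spec hL,
      hpp.walkGain_r_eq h₂.choose_spec hL']
    simp
  · have h : ∃ L, IsWalk H u u L := Multigraph.Reachable.refl H u
    dsimp only
    rw [dif_pos h]
    simpa using hpp.walkGain_r_eq h.choose_spec (L' := []) rfl

lemma balanced_of_gain_potential (φ : α → PM)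
    (hφ : ∀ e ∈ H.edges, m e = (φ (H.fst e))⁻¹ * φ (H.snd e)) : Balanced H m := by
  suffices key : ∀ {u v L}, IsWalk H u v L → walkGain m L = (φ u)⁻¹ * φ v from
    fun u L hw => by simp [key hw]
  intro u v L hw
  induction L generalizing u with
  | nil => obtain rfl : u = v := hw; simp
  | cons s L ih =>
    obtain ⟨he, rfl, ht⟩ := hw
    obtain ⟨e, _ | _⟩ := s <;> simp [ih ht, hφ e he, stepHead, stepTail, mul_assoc]

end Potentials

section Sparsity

variable {G H : Multigraph α β} {m : β → PM} {k l : ℕ}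

lemma Sparse.card_edges_le (h : Sparse k l H) (he : 1 ≤ #H.edges) :
    (#H.edges : ℤ) ≤ k * #H.verts - l :=
  h H (IsSubgraph.refl H) he

lemma Sparse.of_le {l' : ℕ} (h : Sparse k l H) (hl : l' ≤ l) : Sparse k l' H :=
  fun K hK he => (h K hK he).trans (by omega)

lemma Sparse.card_edges_le_of_nonempty (h : Sparse 2 2 H) (hne : H.verts.Nonempty) :
    (#H.edges : ℤ) ≤ 2 * #H.verts - 2 := by
  rcases Nat.eq_zero_or_pos #H.edges with h0 | h1
  · have := hne.card_pos
    omega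
  · exact_mod_cast h.card_edges_le h1

def Overfull (m : β → PM) (H : Multigraph α β) : Prop :=
  1 ≤ #H.edges ∧ (2 * (#H.verts : ℤ) - 1 < #H.edges ∨
    PurelyPeriodic H m ∧ 2 * (#H.verts : ℤ) - 2 < #H.edges ∨
    Balanced H m ∧ 2 * (#H.verts : ℤ) - 3 < #H.edges)

lemma pmTight_iff_not_overfull :
    PMTight G m ↔ (#G.edges : ℤ) = 2 * #G.verts - 1 ∧ ∀ H, IsSubgraph H G → ¬ Overfull m H := by
  constructor
  · rintro ⟨⟨h₁, hc⟩, h₂, h₃⟩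
    refine ⟨by exact_mod_cast hc, fun H hH ⟨he, hov⟩ => ?_⟩
    rcases hov with h | ⟨hpp, h⟩ | ⟨hb, h⟩
    · have := h₁ H hH he; push_cast at this; omega
    · have := h₂ H hH hpp H (IsSubgraph.refl H) he; push_cast at this; omega
    · have := h₃ H hH hb H (IsSubgraph.refl H) he; push_cast at this; omega
  · rintro ⟨hc, h⟩
    refine ⟨⟨fun H hH he => ?_, by exact_mod_cast hc⟩, fun K hK hpp H hH he => ?_,
      fun K hK hb H hH he => ?_⟩ <;> by_contra hlt <;> push_cast at hlt
    · exact h H hH ⟨he, Or.inl (by omega)⟩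
    · exact h H (hH.trans hK) ⟨he, Or.inr (Or.inl ⟨hH.purelyPeriodic hpp, by omega⟩)⟩
    · exact h H (hH.trans hK) ⟨he, Or.inr (Or.inr ⟨hH.balanced hb, by omega⟩)⟩

end Sparsity

/-- Subgraphs of `G` that keep the endpoint maps of `G`, so that unions and intersections of
subgraphs are again subgraphs. -/
structure Subgraph (G : Multigraph α β) where
  verts : Finset α
  edges : Finset β
  verts_subset : verts ⊆ G.verts
  edges_subset : edges ⊆ G.edges
  fst_mem : ∀ e ∈ edges, G.fst e ∈ verts
  snd_mem : ∀ e ∈ edges, G.snd e ∈ verts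

namespace Subgraph

variable {G : Multigraph α β} {m : β → PM} {X Y : Subgraph G} {u w x : α}

def coe (X : Subgraph G) : Multigraph α β :=
  ⟨X.verts, X.edges, G.fst, G.snd, X.fst_mem, X.snd_mem⟩

@[simp] lemma coe_verts : X.coe.verts = X.verts := rfl
@[simp] lemma coe_edges : X.coe.edges = X.edges := rfl

lemma isSubgraph (X : Subgraph G) : IsSubgraph X.coe G :=
  ⟨X.verts_subset, X.edges_subset, fun _ _ => ⟨rfl, rfl⟩⟩

lemma isSubgraph_of_subset (hV : X.verts ⊆ Y.verts) (hE : X.edges ⊆ Y.edges) :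
    IsSubgraph X.coe Y.coe :=
  ⟨hV, hE, fun _ _ => ⟨rfl, rfl⟩⟩

def restrict (X : Subgraph G) (p : α → Prop) [DecidablePred p]
    (hp : ∀ e ∈ X.edges, p (G.fst e) ↔ p (G.snd e)) : Subgraph G where
  verts := X.verts.filter p
  edges := X.edges.filter fun e => p (G.fst e)
  verts_subset := (Finset.filter_subset _ _).trans X.verts_subset
  edges_subset := (Finset.filter_subset _ _).trans X.edges_subset
  fst_mem e he := Finset.mem_filter.2
    ⟨X.fst_mem e (Finset.mem_filter.1 he).1, (Finset.mem_filter.1 he).2⟩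
  snd_mem e he := Finset.mem_filter.2
    ⟨X.snd_mem e (Finset.mem_filter.1 he).1,
      (hp e (Finset.mem_filter.1 he).1).1 (Finset.mem_filter.1 he).2⟩

lemma isSubgraph_restrict (p : α → Prop) [DecidablePred p] (hp) :
    IsSubgraph (X.restrict p hp).coe X.coe :=
  isSubgraph_of_subset (Finset.filter_subset _ _) (Finset.filter_subset _ _)

lemma card_edges_add_two_le_restrict (hX : Sparse 2 2 X.coe) (p : α → Prop) [DecidablePred p]
    (hp) (hb : ∃ b ∈ X.verts, ¬ p b) :
    (#X.edges : ℤ) + 2 ≤ #(X.restrict p hp).edges + 2 * (#X.verts - #(X.restrict p hp).verts) := by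
  set R := X.restrict (fun a => ¬ p a) fun e he => not_congr (hp e he)
  have hV : #(X.restrict p hp).verts + #R.verts = #X.verts :=
    Finset.card_filter_add_card_filter_not p
  have hE : #(X.restrict p hp).edges + #R.edges = #X.edges :=
    Finset.card_filter_add_card_filter_not _
  obtain ⟨b, hbX, hbp⟩ := hb
  have hRX : IsSubgraph R.coe X.coe := isSubgraph_restrict _ _
  have hR : (#R.edges : ℤ) ≤ 2 * #R.verts - 2 :=
    (hRX.sparse hX).card_edges_le_of_nonempty ⟨b, Finset.mem_filter.2 ⟨hbX, hbp⟩⟩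
  omega

lemma card_edges_le_of_not_reachable (hX : Sparse 2 2 X.coe) (hu : u ∈ X.verts)
    (hw : w ∈ X.verts) (h : ¬ X.coe.Reachable u w) : (#X.edges : ℤ) ≤ 2 * #X.verts - 4 := by
  classical
  have hp : ∀ e ∈ X.edges, X.coe.Reachable u (G.fst e) ↔ X.coe.Reachable u (G.snd e) :=
    fun e he => (Multigraph.reachable_snd_iff_fst (H := X.coe) he).symm
  have hP : (#(X.restrict _ hp).edges : ℤ) ≤ 2 * #(X.restrict _ hp).verts - 2 :=
    ((isSubgraph_restrict _ hp).sparse hX).card_edges_le_of_nonempty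
      ⟨u, Finset.mem_filter.2 ⟨hu, Multigraph.Reachable.refl _ u⟩⟩
  have := card_edges_add_two_le_restrict hX _ hp ⟨w, hw, h⟩
  omega

lemma reachable_of_card (hX : Sparse 2 2 X.coe) (hc : 2 * (#X.verts : ℤ) - 3 ≤ #X.edges)
    (hu : u ∈ X.verts) (hw : w ∈ X.verts) : X.coe.Reachable u w := by
  by_contra h
  have := card_edges_le_of_not_reachable hX hu hw h
  omega

lemma reachable_or_reachable_of_card (hX : Sparse 2 2 X.coe) (hu : u ∈ X.verts)
    (hw : w ∈ X.verts) (hc : 2 * (#X.verts : ℤ) - 4 ≤ #X.edges)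
    (hreach : X.coe.Reachable u w → 2 * (#X.verts : ℤ) - 3 ≤ #X.edges) (hx : x ∈ X.verts) :
    X.coe.Reachable u x ∨ X.coe.Reachable w x := by
  classical
  by_contra hux
  set p : α → Prop := fun a => X.coe.Reachable u a ∨ X.coe.Reachable w a
  have hp : ∀ e ∈ X.edges, p (G.fst e) ↔ p (G.snd e) := fun e he =>
    or_congr (Multigraph.reachable_snd_iff_fst (H := X.coe) he).symm
      (Multigraph.reachable_snd_iff_fst (H := X.coe) he).symm
  set P := X.restrict p hp
  have hsplit : (#X.edges : ℤ) + 2 ≤ #P.edges + 2 * (#X.verts - #P.verts) :=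
    card_edges_add_two_le_restrict hX p hp ⟨x, hx, hux⟩
  have hPX : IsSubgraph P.coe X.coe := isSubgraph_restrict p hp
  have huP : u ∈ P.verts := Finset.mem_filter.2 ⟨hu, Or.inl (Multigraph.Reachable.refl _ u)⟩
  have hwP : w ∈ P.verts := Finset.mem_filter.2 ⟨hw, Or.inr (Multigraph.Reachable.refl _ w)⟩
  by_cases huw : X.coe.Reachable u w
  · have hP : (#P.edges : ℤ) ≤ 2 * #P.verts - 2 :=
      (hPX.sparse hX).card_edges_le_of_nonempty ⟨u, huP⟩
    have := hreach huw
    omega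
  · have := card_edges_le_of_not_reachable (hPX.sparse hX) huP hwP fun h => huw (h.mono hPX)
    omega

variable [DecidableEq α] [DecidableEq β]

instance : Max (Subgraph G) where
  max X Y :=
    { verts := X.verts ∪ Y.verts
      edges := X.edges ∪ Y.edges
      verts_subset := Finset.union_subset X.verts_subset Y.verts_subset
      edges_subset := Finset.union_subset X.edges_subset Y.edges_subset
      fst_mem := fun e he => (Finset.mem_union.1 he).elim
        (fun h => Finset.mem_union_left _ (X.fst_mem e h))
        (fun h => Finset.mem_union_right _ (Y.fst_mem e h))
      snd_mem := fun e he => (Finset.mem_union.1 he).elim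
        (fun h => Finset.mem_union_left _ (X.snd_mem e h))
        (fun h => Finset.mem_union_right _ (Y.snd_mem e h)) }

instance : Min (Subgraph G) where
  min X Y :=
    { verts := X.verts ∩ Y.verts
      edges := X.edges ∩ Y.edges
      verts_subset := Finset.inter_subset_left.trans X.verts_subset
      edges_subset := Finset.inter_subset_left.trans X.edges_subset
      fst_mem := fun e he => Finset.mem_inter.2
        ⟨X.fst_mem e (Finset.mem_inter.1 he).1, Y.fst_mem e (Finset.mem_inter.1 he).2⟩
      snd_mem := fun e he => Finset.mem_inter.2
        ⟨X.snd_mem e (Finset.mem_inter.1 he).1, Y.snd_mem e (Finset.mem_inter.1 he).2⟩ }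

@[simp] lemma sup_verts : (X ⊔ Y).verts = X.verts ∪ Y.verts := rfl
@[simp] lemma sup_edges : (X ⊔ Y).edges = X.edges ∪ Y.edges := rfl
@[simp] lemma inf_verts : (X ⊓ Y).verts = X.verts ∩ Y.verts := rfl
@[simp] lemma inf_edges : (X ⊓ Y).edges = X.edges ∩ Y.edges := rfl

lemma card_verts_sup_add_inf : #(X ⊔ Y).verts + #(X ⊓ Y).verts = #X.verts + #Y.verts :=
  Finset.card_union_add_card_inter _ _

lemma card_edges_sup_add_inf : #(X ⊔ Y).edges + #(X ⊓ Y).edges = #X.edges + #Y.edges :=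
  Finset.card_union_add_card_inter _ _

lemma isSubgraph_inf_left : IsSubgraph (X ⊓ Y).coe X.coe :=
  isSubgraph_of_subset Finset.inter_subset_left Finset.inter_subset_left

lemma isSubgraph_inf_right : IsSubgraph (X ⊓ Y).coe Y.coe :=
  isSubgraph_of_subset Finset.inter_subset_right Finset.inter_subset_right

lemma isPotential_sup {ρ ρ' : α → Bool} (hX : IsPotential X.coe m ρ)
    (hY : IsPotential Y.coe m ρ') (h : ∀ a ∈ X.verts, a ∈ Y.verts → ρ a = ρ' a) :
    IsPotential (X ⊔ Y).coe m fun a => if a ∈ X.verts then ρ a else ρ' a := by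
  intro e he
  show _ = xor (if G.fst e ∈ X.verts then ρ (G.fst e) else ρ' (G.fst e))
    (if G.snd e ∈ X.verts then ρ (G.snd e) else ρ' (G.snd e))
  rcases Finset.mem_union.1 he with he | he
  · rw [if_pos (X.fst_mem e he), if_pos (X.snd_mem e he)]
    exact hX e he
  · have key : ∀ a ∈ Y.verts, (if a ∈ X.verts then ρ a else ρ' a) = ρ' a := fun a ha => by
      split_ifs with hx
      exacts [h a hx ha, rfl]
    rw [key _ (Y.fst_mem e he), key _ (Y.snd_mem e he)]
    exact hY e he

end Subgraph

section PMTight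

variable {G : Multigraph α β} {m : β → PM}

lemma PMTight.card_edges_le (hT : PMTight G m) (X : Subgraph G)
    (he : 1 ≤ #X.edges) : (#X.edges : ℤ) ≤ 2 * #X.verts - 1 := by
  exact_mod_cast hT.1.1 X.coe X.isSubgraph he

lemma PMTight.sparse_of_purelyPeriodic (hT : PMTight G m) (X : Subgraph G)
    (h : PurelyPeriodic X.coe m) : Sparse 2 2 X.coe :=
  hT.2.1 X.coe X.isSubgraph h

lemma PMTight.sparse_of_balanced (hT : PMTight G m) (X : Subgraph G)
    (h : Balanced X.coe m) : Sparse 2 3 X.coe :=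
  hT.2.2 X.coe X.isSubgraph h

end PMTight

section Obstructions

variable {G H : Multigraph α β} {m : β → PM} {x y : α} {g : PM}

def PeriodicObstruction (m : β → PM) (x y : α) (g : PM) (B : Subgraph G) : Prop :=
  PurelyPeriodic B.coe m ∧ 2 * (#B.verts : ℤ) - 2 ≤ #B.edges ∧
    ∀ L, IsWalk B.coe x y L → (walkGain m L).r = g.r

def BalancedObstruction (m : β → PM) (x y : α) (g : PM) (B : Subgraph G) : Prop :=
  Balanced B.coe m ∧ 2 * (#B.verts : ℤ) - 3 ≤ #B.edges ∧
    ∀ L, IsWalk B.coe x y L → walkGain m L = g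

/-- Adding to `B` an edge from `x` to `y` with gain `g` makes it overfull. -/
structure Obstructs (m : β → PM) (x y : α) (g : PM) (B : Subgraph G) : Prop where
  left_mem : x ∈ B.verts
  right_mem : y ∈ B.verts
  kind : 2 * (#B.verts : ℤ) - 1 ≤ #B.edges ∨ PeriodicObstruction m x y g B ∨
    BalancedObstruction m x y g B

lemma periodic_of_obstruction {B : Subgraph G}
    (h : PeriodicObstruction m x y g B ∨ BalancedObstruction m x y g B) :
    PurelyPeriodic B.coe m ∧ 2 * (#B.verts : ℤ) - 3 ≤ #B.edges ∧
      ∀ L, IsWalk B.coe x y L → (walkGain m L).r = g.r := by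
  rcases h with ⟨hp, hc, hw⟩ | ⟨hb, hc, hw⟩
  · exact ⟨hp, by omega, hw⟩
  · exact ⟨hb.purelyPeriodic, hc, fun L hL => by rw [hw L hL]⟩

lemma exists_isPotential_of_obstruction (hT : PMTight G m) {B : Subgraph G}
    (hx : x ∈ B.verts) (hy : y ∈ B.verts)
    (h : PeriodicObstruction m x y g B ∨ BalancedObstruction m x y g B) :
    ∃ ρ, IsPotential B.coe m ρ ∧ ρ x = false ∧ ρ y = g.r := by
  obtain ⟨hpp, hc, hw⟩ := periodic_of_obstruction h
  have hconn : ∀ v ∈ B.verts, B.coe.Reachable x v := fun v hv =>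
    Subgraph.reachable_of_card (hT.sparse_of_purelyPeriodic B hpp) hc hx hv
  obtain ⟨ρ, hρ, hρx⟩ := hpp.exists_isPotential hconn
  obtain ⟨L, hL⟩ := hconn y hy
  refine ⟨ρ, hρ, hρx, ?_⟩
  simpa [hρx, hw L hL] using (hρ.walkGain_r hL).symm

lemma BalancedObstruction.not_reachable_inf [DecidableEq α] [DecidableEq β]
    {B₁ B₂ : Subgraph G} {g₁ g₂ : PM} (h₁ : BalancedObstruction m x y g₁ B₁)
    (h₂ : BalancedObstruction m x y g₂ B₂) (hg : g₁ ≠ g₂) : ¬ (B₁ ⊓ B₂).coe.Reachable x y :=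
  fun ⟨L, hL⟩ => hg ((h₁.2.2 L (Subgraph.isSubgraph_inf_left.isWalk hL)).symm.trans
    (h₂.2.2 L (Subgraph.isSubgraph_inf_right.isWalk hL)))

variable [DecidableEq β]

def Subgraph.ofEraseEdge (Y : Multigraph α β) (f : β) (hV : Y.verts ⊆ G.verts)
    (hE : ∀ e ∈ Y.edges, e ≠ f → e ∈ G.edges ∧ Y.fst e = G.fst e ∧ Y.snd e = G.snd e) :
    Subgraph G where
  verts := Y.verts
  edges := Y.edges.erase f
  verts_subset := hV
  edges_subset e he := (hE e (Finset.mem_of_mem_erase he) (Finset.ne_of_mem_erase he)).1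
  fst_mem e he := (hE e (Finset.mem_of_mem_erase he) (Finset.ne_of_mem_erase he)).2.1 ▸
    Y.fst_mem e (Finset.mem_of_mem_erase he)
  snd_mem e he := (hE e (Finset.mem_of_mem_erase he) (Finset.ne_of_mem_erase he)).2.2 ▸
    Y.snd_mem e (Finset.mem_of_mem_erase he)

lemma Subgraph.isSubgraph_ofEraseEdge {Y : Multigraph α β} {f : β} (hV) (hE) :
    IsSubgraph (Subgraph.ofEraseEdge (G := G) Y f hV hE).coe Y :=
  ⟨subset_rfl, Finset.erase_subset f Y.edges, fun e he =>
    ⟨(hE e (Finset.mem_of_mem_erase he) (Finset.ne_of_mem_erase he)).2.1.symm,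
      (hE e (Finset.mem_of_mem_erase he) (Finset.ne_of_mem_erase he)).2.2.symm⟩⟩

variable [DecidableEq α]

lemma IsSubgraph.addEdge_edges {Y : Multigraph α β} (hH : IsSubgraph H G) {f : β}
    (hY : IsSubgraph Y (H.addEdge f x y)) :
    ∀ e ∈ Y.edges, e ≠ f → e ∈ G.edges ∧ Y.fst e = G.fst e ∧ Y.snd e = G.snd e := by
  intro e he hef
  have heH : e ∈ H.edges := (Finset.mem_insert.1 (hY.2.1 he)).resolve_left hef
  obtain ⟨h₁, h₂⟩ := hY.2.2 e he
  obtain ⟨h₃, h₄⟩ := hH.2.2 e heH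
  exact ⟨hH.2.1 heH, h₁.trans ((Function.update_of_ne hef _ _).trans h₃),
    h₂.trans ((Function.update_of_ne hef _ _).trans h₄)⟩

lemma exists_obstructs_of_not_pmTight_addEdge (hT : PMTight G m) (hH : IsSubgraph H G)
    {f : β} (hx : x ∈ G.verts) (hy : y ∈ G.verts)
    (hc : (#(H.addEdge f x y).edges : ℤ) = 2 * #(H.addEdge f x y).verts - 1)
    (hnot : ¬ PMTight (H.addEdge f x y) (Function.update m f g)) :
    ∃ B : Subgraph G, B.verts ⊆ (H.addEdge f x y).verts ∧ Obstructs m x y g B := by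
  set m' := Function.update m f g
  obtain ⟨Y, hY, hov⟩ : ∃ Y, IsSubgraph Y (H.addEdge f x y) ∧ Overfull m' Y := by
    by_contra! h
    exact hnot (pmTight_iff_not_overfull.2 ⟨hc, h⟩)
  have hYV : Y.verts ⊆ G.verts :=
    hY.1.trans (by simp [Multigraph.addEdge, Finset.insert_subset_iff, hx, hy, hH.1])
  set B := Subgraph.ofEraseEdge Y f hYV (hH.addEdge_edges hY)
  have hBY : IsSubgraph B.coe Y := Subgraph.isSubgraph_ofEraseEdge _ _
  have hm' : ∀ e ∈ B.coe.edges, m' e = m e := fun e he =>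
    Function.update_of_ne (Finset.ne_of_mem_erase he) _ _
  by_cases hf : f ∈ Y.edges
  · have hfx : Y.fst f = x := (hY.2.2 f hf).1.trans (Function.update_self _ _ _)
    have hfy : Y.snd f = y := (hY.2.2 f hf).2.trans (Function.update_self _ _ _)
    have hclose : ∀ {L}, IsWalk B.coe x y L → IsWalk Y x x (L ++ [(f, false)]) ∧
        walkGain m' (L ++ [(f, false)]) = walkGain m L * g⁻¹ :=
      fun hw => ⟨(hBY.isWalk hw).append ⟨hf, hfy, hfx⟩, by simp [hw.walkGain_eq hm', m']⟩
    have hV : #B.verts = #Y.verts := rfl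
    have hE : #B.edges + 1 = #Y.edges := Finset.card_erase_add_one hf
    refine ⟨B, hY.1, hfx ▸ Y.fst_mem f hf, hfy ▸ Y.snd_mem f hf, ?_⟩
    rcases hov.2 with h | ⟨hp, h⟩ | ⟨hb, h⟩
    · exact Or.inl (by omega)
    · refine Or.inr (Or.inl ⟨(hBY.purelyPeriodic hp).congr hm', by omega, fun L hw => ?_⟩)
      simpa [(hclose hw).2] using hp x _ (hclose hw).1
    · refine Or.inr (Or.inr ⟨(hBY.balanced hb).congr hm', by omega, fun L hw => ?_⟩)
      exact mul_inv_eq_one.1 ((hclose hw).2 ▸ hb x _ (hclose hw).1)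
  · have hV : #B.coe.verts = #Y.verts := rfl
    have hE : #B.coe.edges = #Y.edges := congrArg Finset.card (Finset.erase_eq_of_notMem hf)
    refine absurd ?_ ((pmTight_iff_not_overfull.1 hT).2 B.coe B.isSubgraph)
    obtain ⟨he, h | ⟨hp, h⟩ | ⟨hb, h⟩⟩ := hov
    · exact ⟨by omega, Or.inl (by omega)⟩
    · exact ⟨by omega, Or.inr (Or.inl ⟨(hBY.purelyPeriodic hp).congr hm', by omega⟩)⟩
    · exact ⟨by omega, Or.inr (Or.inr ⟨(hBY.balanced hb).congr hm', by omega⟩)⟩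

end Obstructions

section Star

variable {G : Multigraph α β} {m : β → PM} {e : β} {u v w : α}

lemma Joins.fst_eq_or (h : Joins G e u v) : G.fst e = u ∨ G.fst e = v := by
  rcases h with h | h
  exacts [Or.inl h.1, Or.inr h.1]

lemma Joins.snd_eq_or (h : Joins G e u v) : G.snd e = u ∨ G.snd e = v := by
  rcases h with h | h
  exacts [Or.inr h.2, Or.inl h.2]

lemma Joins.xor_eq (h : Joins G e u v) (ρ : α → Bool) :
    xor (ρ (G.fst e)) (ρ (G.snd e)) = xor (ρ u) (ρ v) := by
  rcases h with ⟨h₁, h₂⟩ | ⟨h₁, h₂⟩ <;> simp [h₁, h₂, Bool.xor_comm]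

lemma Joins.left_mem (h : Joins G e u v) {X : Subgraph G} (he : e ∈ X.edges) : u ∈ X.verts := by
  rcases h with ⟨h₁, -⟩ | ⟨-, h₂⟩
  exacts [h₁ ▸ X.fst_mem e he, h₂ ▸ X.snd_mem e he]

lemma Joins.right_mem (h : Joins G e u v) (he : e ∈ G.edges) : v ∈ G.verts := by
  rcases h with ⟨-, h₂⟩ | ⟨h₁, -⟩
  exacts [h₂ ▸ G.snd_mem e he, h₁ ▸ G.fst_mem e he]

variable [DecidableEq α]

lemma joins_of_otherEnd (hi : G.fst e = v ∨ G.snd e = v) (ho : otherEnd G v e = w) :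
    Joins G e v w := by
  unfold otherEnd at ho
  split_ifs at ho with h
  · exact Or.inl ⟨h, ho⟩
  · exact Or.inr ⟨ho, hi.resolve_left h⟩

lemma Multigraph.card_incident_le_degree (G : Multigraph α β) (v : α) :
    #(G.edges.filter fun e => G.fst e = v ∨ G.snd e = v) ≤ G.degree v := by
  rw [Finset.card_filter, Multigraph.degree]
  gcongr with e
  split_ifs <;> simp_all

variable [DecidableEq β]

lemma Multigraph.incident_eq_of_degree_eq_three {e₁ e₂ e₃ : β} (hdeg : G.degree v = 3)
    (h₁₂ : e₁ ≠ e₂) (h₁₃ : e₁ ≠ e₃) (h₂₃ : e₂ ≠ e₃)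
    (hm₁ : e₁ ∈ G.edges) (hm₂ : e₂ ∈ G.edges) (hm₃ : e₃ ∈ G.edges)
    (hi₁ : G.fst e₁ = v ∨ G.snd e₁ = v) (hi₂ : G.fst e₂ = v ∨ G.snd e₂ = v)
    (hi₃ : G.fst e₃ = v ∨ G.snd e₃ = v) :
    G.edges.filter (fun e => G.fst e = v ∨ G.snd e = v) = {e₁, e₂, e₃} := by
  refine (Finset.eq_of_subset_of_card_le ?_ ?_).symm
  · simp [Finset.insert_subset_iff, hm₁, hm₂, hm₃, hi₁, hi₂, hi₃]
  · rw [Finset.card_insert_of_notMem (by simp [h₁₂, h₁₃]), Finset.card_pair h₂₃]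
    exact (G.card_incident_le_degree v).trans hdeg.le

structure TwoNeighbourStar (G : Multigraph α β) (v₀ v₁ v₂ : α) (e₁ e₂ e₃ : β) : Prop where
  v₁_ne : v₁ ≠ v₀
  v₂_ne : v₂ ≠ v₀
  v₁_ne_v₂ : v₁ ≠ v₂
  e₁_ne_e₂ : e₁ ≠ e₂
  e₁_ne_e₃ : e₁ ≠ e₃
  e₂_ne_e₃ : e₂ ≠ e₃
  joins₁ : Joins G e₁ v₀ v₁
  joins₂ : Joins G e₂ v₀ v₂
  joins₃ : Joins G e₃ v₀ v₂
  incident : G.edges.filter (fun e => G.fst e = v₀ ∨ G.snd e = v₀) = {e₁, e₂, e₃}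

end Star

namespace TwoNeighbourStar

variable {G : Multigraph α β} {m : β → PM} [DecidableEq α] [DecidableEq β]
  {v₀ v₁ v₂ : α} {e₁ e₂ e₃ : β} {g g₁ g₂ : PM} {B B₁ B₂ T : Subgraph G}

lemma mem_edges (S : TwoNeighbourStar G v₀ v₁ v₂ e₁ e₂ e₃) :
    e₁ ∈ G.edges ∧ e₂ ∈ G.edges ∧ e₃ ∈ G.edges := by
  have h := S.incident ▸ Finset.filter_subset (fun e => G.fst e = v₀ ∨ G.snd e = v₀) G.edges
  simpa [Finset.insert_subset_iff] using h

lemma mem_verts (S : TwoNeighbourStar G v₀ v₁ v₂ e₁ e₂ e₃) :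
    v₀ ∈ G.verts ∧ v₁ ∈ G.verts ∧ v₂ ∈ G.verts := by
  obtain ⟨h₁, h₂, -⟩ := S.mem_edges
  refine ⟨?_, S.joins₁.right_mem h₁, S.joins₂.right_mem h₂⟩
  rcases S.joins₁ with ⟨h, -⟩ | ⟨-, h⟩
  exacts [h ▸ G.fst_mem e₁ h₁, h ▸ G.snd_mem e₁ h₁]

def star (S : TwoNeighbourStar G v₀ v₁ v₂ e₁ e₂ e₃) : Subgraph G where
  verts := {v₀, v₁, v₂}
  edges := {e₁, e₂, e₃}
  verts_subset := by simp [Finset.insert_subset_iff, S.mem_verts]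
  edges_subset := by simp [Finset.insert_subset_iff, S.mem_edges]
  fst_mem e he := by
    simp only [Finset.mem_insert, Finset.mem_singleton] at he ⊢
    rcases he with rfl | rfl | rfl
    · rcases S.joins₁.fst_eq_or with h | h <;> simp [h]
    · rcases S.joins₂.fst_eq_or with h | h <;> simp [h]
    · rcases S.joins₃.fst_eq_or with h | h <;> simp [h]
  snd_mem e he := by
    simp only [Finset.mem_insert, Finset.mem_singleton] at he ⊢
    rcases he with rfl | rfl | rfl
    · rcases S.joins₁.snd_eq_or with h | h <;> simp [h]
    · rcases S.joins₂.snd_eq_or with h | h <;> simp [h]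
    · rcases S.joins₃.snd_eq_or with h | h <;> simp [h]

lemma card_sup_star (S : TwoNeighbourStar G v₀ v₁ v₂ e₁ e₂ e₃) (D : Subgraph G)
    (h₀ : v₀ ∉ D.verts) (h₁ : v₁ ∈ D.verts) (h₂ : v₂ ∈ D.verts) :
    #(D ⊔ S.star).verts = #D.verts + 1 ∧ #(D ⊔ S.star).edges = #D.edges + 3 := by
  constructor
  · have : (D ⊔ S.star).verts = insert v₀ D.verts := by
      ext a
      simp only [Subgraph.sup_verts, star, Finset.mem_union, Finset.mem_insert,
        Finset.mem_singleton]
      constructor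
      · rintro (h | rfl | rfl | rfl) <;> simp_all
      · rintro (rfl | h) <;> simp_all
    rw [this, Finset.card_insert_of_notMem h₀]
  · have hdisj : Disjoint D.edges S.star.edges := by
      simp only [star, Finset.disjoint_insert_right, Finset.disjoint_singleton_right]
      exact ⟨fun h => h₀ (S.joins₁.left_mem h), fun h => h₀ (S.joins₂.left_mem h),
        fun h => h₀ (S.joins₃.left_mem h)⟩
    rw [Subgraph.sup_edges, Finset.card_union_of_disjoint hdisj]
    simp [star, S.e₁_ne_e₂, S.e₁_ne_e₃, S.e₂_ne_e₃]

lemma card_edges_le_of_notMem (S : TwoNeighbourStar G v₀ v₁ v₂ e₁ e₂ e₃) (hT : PMTight G m)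
    (D : Subgraph G) (h₀ : v₀ ∉ D.verts) (h₁ : v₁ ∈ D.verts) (h₂ : v₂ ∈ D.verts) :
    (#D.edges : ℤ) ≤ 2 * #D.verts - 2 := by
  obtain ⟨hV, hE⟩ := S.card_sup_star D h₀ h₁ h₂
  have := hT.card_edges_le (D ⊔ S.star) (by omega)
  rw [hV, hE] at this
  push_cast at this
  omega

lemma gainFrom_ne (S : TwoNeighbourStar G v₀ v₁ v₂ e₁ e₂ e₃) (hT : PMTight G m) :
    gainFrom G m v₀ e₂ ≠ gainFrom G m v₀ e₃ := by
  intro h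
  let D : Subgraph G :=
    { verts := {v₀, v₂}
      edges := {e₂, e₃}
      verts_subset := by simp [Finset.insert_subset_iff, S.mem_verts]
      edges_subset := by simp [Finset.insert_subset_iff, S.mem_edges]
      fst_mem := fun e he => by
        simp only [Finset.mem_insert, Finset.mem_singleton] at he ⊢
        rcases he with rfl | rfl
        exacts [S.joins₂.fst_eq_or, S.joins₃.fst_eq_or]
      snd_mem := fun e he => by
        simp only [Finset.mem_insert, Finset.mem_singleton] at he ⊢
        rcases he with rfl | rfl
        exacts [S.joins₂.snd_eq_or, S.joins₃.snd_eq_or] }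
  set φ : α → PM := fun a => if a = v₀ then 1 else gainFrom G m v₀ e₂
  have hφ : ∀ e, Joins G e v₀ v₂ → gainFrom G m v₀ e = gainFrom G m v₀ e₂ →
      m e = (φ (G.fst e))⁻¹ * φ (G.snd e) := by
    rintro e (⟨h₁, h₂⟩ | ⟨h₁, h₂⟩) he <;> simp only [φ, ← he] <;>
      simp [gainFrom, h₁, h₂, S.v₂_ne]
  have hbal : Balanced D.coe m := by
    refine balanced_of_gain_potential φ fun e he => ?_
    simp only [D, Subgraph.coe, Finset.mem_insert, Finset.mem_singleton] at he
    rcases he with rfl | rfl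
    exacts [hφ e S.joins₂ rfl, hφ e S.joins₃ h.symm]
  have := (hT.sparse_of_balanced D hbal).card_edges_le (by simp [D, Subgraph.coe, S.e₂_ne_e₃])
  simp [D, Subgraph.coe, S.e₂_ne_e₃, S.v₂_ne.symm] at this

lemma card_edges_reduction (S : TwoNeighbourStar G v₀ v₁ v₂ e₁ e₂ e₃) (hT : PMTight G m)
    {x y : α} (hx : x ∈ G.verts) (hx₀ : x ≠ v₀) (hy : y ∈ G.verts) (hy₀ : y ≠ v₀) :
    (#((G.deleteVertex v₀).addEdge e₁ x y).edges : ℤ) =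
      2 * #((G.deleteVertex v₀).addEdge e₁ x y).verts - 1 := by
  have hV : ((G.deleteVertex v₀).addEdge e₁ x y).verts = G.verts.erase v₀ := by
    simp [Multigraph.addEdge, Multigraph.deleteVertex, hx, hx₀, hy, hy₀]
  have hsplit := Finset.card_filter_add_card_filter_not (s := G.edges)
    (fun e => G.fst e = v₀ ∨ G.snd e = v₀)
  simp only [S.incident, not_or, ← ne_eq] at hsplit
  have he₁ : e₁ ∉ G.edges.filter fun e => G.fst e ≠ v₀ ∧ G.snd e ≠ v₀ := by
    rcases S.joins₁ with ⟨h, -⟩ | ⟨-, h⟩ <;> simp [h]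
  have h₃ : #({e₁, e₂, e₃} : Finset β) = 3 := by simp [S.e₁_ne_e₂, S.e₁_ne_e₃, S.e₂_ne_e₃]
  have hE : #((G.deleteVertex v₀).addEdge e₁ x y).edges + 2 = #G.edges := by
    simp only [Multigraph.addEdge, Multigraph.deleteVertex, Finset.card_insert_of_notMem he₁]
    omega
  have hG := hT.1.2
  have := Finset.card_pos.2 ⟨v₀, S.mem_verts.1⟩
  rw [hV, Finset.card_erase_of_mem S.mem_verts.1]
  push_cast at hG ⊢
  omega

lemma exists_obstructs (S : TwoNeighbourStar G v₀ v₁ v₂ e₁ e₂ e₃) (hT : PMTight G m) {x y : α}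
    (hx : x ∈ G.verts) (hx₀ : x ≠ v₀) (hy : y ∈ G.verts) (hy₀ : y ≠ v₀)
    (h : ¬ PMTight ((G.deleteVertex v₀).addEdge e₁ x y) (Function.update m e₁ g)) :
    ∃ B : Subgraph G, v₀ ∉ B.verts ∧ Obstructs m x y g B := by
  obtain ⟨B, hBV, hB⟩ := exists_obstructs_of_not_pmTight_addEdge hT
    (G.isSubgraph_deleteVertex v₀) hx hy (S.card_edges_reduction hT hx hx₀ hy hy₀) h
  refine ⟨B, fun h₀ => ?_, hB⟩
  simpa [Multigraph.addEdge, Multigraph.deleteVertex, hx₀.symm, hy₀.symm] using hBV h₀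

lemma periodic_or_balanced (S : TwoNeighbourStar G v₀ v₁ v₂ e₁ e₂ e₃) (hT : PMTight G m)
    (hB : Obstructs m v₁ v₂ g B) (h₀ : v₀ ∉ B.verts) :
    PeriodicObstruction m v₁ v₂ g B ∨ BalancedObstruction m v₁ v₂ g B :=
  hB.kind.resolve_left fun hc => by
    have := S.card_edges_le_of_notMem hT B h₀ hB.left_mem hB.right_mem
    omega

lemma card_sup_and_reachable (S : TwoNeighbourStar G v₀ v₁ v₂ e₁ e₂ e₃) (hT : PMTight G m)
    (hg : g₁ ≠ g₂) (hB₁ : Obstructs m v₁ v₂ g₁ B₁) (h₀₁ : v₀ ∉ B₁.verts)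
    (hB₂ : Obstructs m v₁ v₂ g₂ B₂) (h₀₂ : v₀ ∉ B₂.verts) :
    2 * (#(B₁ ⊔ B₂).verts : ℤ) - 2 ≤ #(B₁ ⊔ B₂).edges ∧
      ∀ a ∈ (B₁ ⊓ B₂).verts, (B₁ ⊓ B₂).coe.Reachable v₁ a ∨ (B₁ ⊓ B₂).coe.Reachable v₂ a := by
  have hV := Subgraph.card_verts_sup_add_inf (X := B₁) (Y := B₂)
  have hE := Subgraph.card_edges_sup_add_inf (X := B₁) (Y := B₂)
  have hU := S.card_edges_le_of_notMem hT (B₁ ⊔ B₂) (by simp [h₀₁, h₀₂])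
    (Finset.mem_union_left _ hB₁.left_mem) (Finset.mem_union_left _ hB₁.right_mem)
  have hI₁ : v₁ ∈ (B₁ ⊓ B₂).verts := Finset.mem_inter.2 ⟨hB₁.left_mem, hB₂.left_mem⟩
  have hI₂ : v₂ ∈ (B₁ ⊓ B₂).verts := Finset.mem_inter.2 ⟨hB₁.right_mem, hB₂.right_mem⟩
  have hI : 2 ≤ #(B₁ ⊓ B₂).verts := by
    simpa [Finset.card_pair S.v₁_ne_v₂] using
      Finset.card_le_card (Finset.insert_subset hI₁ (Finset.singleton_subset_iff.2 hI₂))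
  obtain ⟨hpp₁, hc₁, -⟩ := periodic_of_obstruction (S.periodic_or_balanced hT hB₁ h₀₁)
  obtain ⟨-, hc₂, -⟩ := periodic_of_obstruction (S.periodic_or_balanced hT hB₂ h₀₂)
  have hsp : Sparse 2 2 (B₁ ⊓ B₂).coe :=
    hT.sparse_of_purelyPeriodic _ (Subgraph.isSubgraph_inf_left.purelyPeriodic hpp₁)
  suffices h : 2 * (#(B₁ ⊔ B₂).verts : ℤ) - 2 ≤ #(B₁ ⊔ B₂).edges ∧
      ((B₁ ⊓ B₂).coe.Reachable v₁ v₂ → 2 * (#(B₁ ⊓ B₂).verts : ℤ) - 3 ≤ #(B₁ ⊓ B₂).edges) from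
    ⟨h.1, fun a ha => Subgraph.reachable_or_reachable_of_card hsp hI₁ hI₂ (by omega) h.2 ha⟩
  have hbal : ∀ B : Subgraph G, IsSubgraph (B₁ ⊓ B₂).coe B.coe → Balanced B.coe m →
      1 ≤ #(B₁ ⊓ B₂).edges → (#(B₁ ⊓ B₂).edges : ℤ) ≤ 2 * #(B₁ ⊓ B₂).verts - 3 :=
    fun B hB hb he => by
      simpa using (hT.sparse_of_balanced _ (hB.balanced hb)).card_edges_le he
  rcases S.periodic_or_balanced hT hB₁ h₀₁ with hP₁ | hQ₁ <;>
    rcases S.periodic_or_balanced hT hB₂ h₀₂ with hP₂ | hQ₂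
  · have : (#(B₁ ⊓ B₂).edges : ℤ) ≤ 2 * #(B₁ ⊓ B₂).verts - 2 :=
      hsp.card_edges_le_of_nonempty ⟨v₁, hI₁⟩
    have := hP₁.2.1
    have := hP₂.2.1
    exact ⟨by omega, fun _ => by omega⟩
  · have := hP₁.2.1
    have := hbal B₂ Subgraph.isSubgraph_inf_right hQ₂.1 (by omega)
    exact ⟨by omega, fun _ => by omega⟩
  · have := hP₂.2.1
    have := hbal B₁ Subgraph.isSubgraph_inf_left hQ₁.1 (by omega)
    exact ⟨by omega, fun _ => by omega⟩
  · have hnr := hQ₁.not_reachable_inf hQ₂ hg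
    have := Subgraph.card_edges_le_of_not_reachable hsp hI₁ hI₂ hnr
    exact ⟨by omega, fun h => absurd h hnr⟩

lemma false_of_isPotential (S : TwoNeighbourStar G v₀ v₁ v₂ e₁ e₂ e₃) (hT : PMTight G m)
    (hr : (m e₂).r = (m e₃).r) (U : Subgraph G) (h₀ : v₀ ∉ U.verts) (h₁ : v₁ ∈ U.verts)
    (h₂ : v₂ ∈ U.verts) {ρ : α → Bool} (hρ : IsPotential U.coe m ρ) (hρ₁ : ρ v₁ = false)
    (hρ₂ : ρ v₂ = xor (m e₁).r (m e₂).r) (hc : 2 * (#U.verts : ℤ) - 2 ≤ #U.edges) : False := by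
  set ρ' := Function.update ρ v₀ (m e₁).r
  have hU : IsPotential U.coe m ρ' := fun e he => by
    have hf : G.fst e ≠ v₀ := fun h => h₀ (h ▸ U.fst_mem e he)
    have hs : G.snd e ≠ v₀ := fun h => h₀ (h ▸ U.snd_mem e he)
    simpa [ρ', Subgraph.coe, hf, hs] using hρ e he
  have hstar : IsPotential S.star.coe m ρ' := by
    intro e he
    simp only [star, Subgraph.coe, Finset.mem_insert, Finset.mem_singleton] at he ⊢
    rcases he with rfl | rfl | rfl
    · simp [S.joins₁.xor_eq, ρ', S.v₁_ne, hρ₁]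
    · simp [S.joins₂.xor_eq, ρ', S.v₂_ne, hρ₂]
    · simp [S.joins₃.xor_eq, ρ', S.v₂_ne, hρ₂, hr]
  have hpp := (Subgraph.isPotential_sup hU hstar fun _ _ _ => rfl).purelyPeriodic
  obtain ⟨hV, hE⟩ := S.card_sup_star U h₀ h₁ h₂
  have : (#(U ⊔ S.star).edges : ℤ) ≤ 2 * #(U ⊔ S.star).verts - 2 := by
    simpa using (hT.sparse_of_purelyPeriodic _ hpp).card_edges_le
      (show 1 ≤ #(U ⊔ S.star).edges by omega)
  omega

lemma false_of_r_eq (S : TwoNeighbourStar G v₀ v₁ v₂ e₁ e₂ e₃) (hT : PMTight G m)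
    (hr : (m e₂).r = (m e₃).r) (hg : g₁ ≠ g₂) (hg₁ : g₁.r = xor (m e₁).r (m e₂).r)
    (hg₂ : g₂.r = xor (m e₁).r (m e₂).r) (hB₁ : Obstructs m v₁ v₂ g₁ B₁) (h₀₁ : v₀ ∉ B₁.verts)
    (hB₂ : Obstructs m v₁ v₂ g₂ B₂) (h₀₂ : v₀ ∉ B₂.verts) : False := by
  obtain ⟨ρ₁, hρ₁, hρ₁v₁, hρ₁v₂⟩ := exists_isPotential_of_obstruction hT hB₁.left_mem
    hB₁.right_mem (S.periodic_or_balanced hT hB₁ h₀₁)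
  obtain ⟨ρ₂, hρ₂, hρ₂v₁, hρ₂v₂⟩ := exists_isPotential_of_obstruction hT hB₂.left_mem
    hB₂.right_mem (S.periodic_or_balanced hT hB₂ h₀₂)
  obtain ⟨hc, hreach⟩ := S.card_sup_and_reachable hT hg hB₁ h₀₁ hB₂ h₀₂
  -- `ρ₁` and `ρ₂` agree at `v₁` and `v₂`, hence on all of `B₁ ⊓ B₂`
  have hagree : ∀ a ∈ B₁.verts, a ∈ B₂.verts → ρ₁ a = ρ₂ a := fun a ha₁ ha₂ => by
    have h₁ := (Subgraph.isSubgraph_inf_left (Y := B₂)).isPotential hρ₁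
    have h₂ := (Subgraph.isSubgraph_inf_right (X := B₁)).isPotential hρ₂
    rcases hreach a (Finset.mem_inter.2 ⟨ha₁, ha₂⟩) with ⟨L, hL⟩ | ⟨L, hL⟩
    · exact h₁.eq_of_isWalk h₂ hL (hρ₁v₁.trans hρ₂v₁.symm)
    · exact h₁.eq_of_isWalk h₂ hL (by rw [hρ₁v₂, hρ₂v₂, hg₁, hg₂])
  refine S.false_of_isPotential hT hr (B₁ ⊔ B₂) (by simp [h₀₁, h₀₂])
    (Finset.mem_union_left _ hB₁.left_mem) (Finset.mem_union_left _ hB₁.right_mem)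
    (Subgraph.isPotential_sup hρ₁ hρ₂ hagree) ?_ ?_ hc
  · simp [hB₁.left_mem, hρ₁v₁]
  · simp [hB₁.right_mem, hρ₁v₂, hg₁]

lemma card_inf_of_tight (S : TwoNeighbourStar G v₀ v₁ v₂ e₁ e₂ e₃) (hT : PMTight G m)
    (hT₀ : v₀ ∉ T.verts) (hTc : 2 * (#T.verts : ℤ) - 1 ≤ #T.edges) {D : Subgraph G}
    (hD₀ : v₀ ∉ D.verts) (h₁ : v₁ ∈ D.verts) (h₂ : v₂ ∈ D.verts) :
    (#D.edges : ℤ) - 2 * #D.verts + 1 ≤ #(D ⊓ T).edges - 2 * #(D ⊓ T).verts := by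
  have := S.card_edges_le_of_notMem hT (D ⊔ T) (by simp [hD₀, hT₀]) (Finset.mem_union_left _ h₁)
    (Finset.mem_union_left _ h₂)
  have := Subgraph.card_verts_sup_add_inf (X := D) (Y := T)
  have := Subgraph.card_edges_sup_add_inf (X := D) (Y := T)
  omega

lemma balancedObstruction_of_tight (S : TwoNeighbourStar G v₀ v₁ v₂ e₁ e₂ e₃)
    (hT : PMTight G m) (hT₀ : v₀ ∉ T.verts) (hT₂ : v₂ ∈ T.verts)
    (hTc : 2 * (#T.verts : ℤ) - 1 ≤ #T.edges) (hB : Obstructs m v₁ v₂ g B) (h₀ : v₀ ∉ B.verts) :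
    BalancedObstruction m v₁ v₂ g B ∧ (B ⊓ T).verts = {v₂} ∧ (B ⊓ T).edges = ∅ := by
  have hk := S.card_inf_of_tight hT hT₀ hTc h₀ hB.left_mem hB.right_mem
  have hI₂ : v₂ ∈ (B ⊓ T).verts := Finset.mem_inter.2 ⟨hB.right_mem, hT₂⟩
  have hI := Finset.card_pos.2 ⟨v₂, hI₂⟩
  rcases S.periodic_or_balanced hT hB h₀ with ⟨hpp, hc, -⟩ | hQ
  · have : (#(B ⊓ T).edges : ℤ) ≤ 2 * #(B ⊓ T).verts - 2 :=
      (hT.sparse_of_purelyPeriodic _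
        (Subgraph.isSubgraph_inf_left.purelyPeriodic hpp)).card_edges_le_of_nonempty ⟨v₂, hI₂⟩
    omega
  · have hc := hQ.2.1
    have hE : #(B ⊓ T).edges = 0 := by
      by_contra h
      have : (#(B ⊓ T).edges : ℤ) ≤ 2 * #(B ⊓ T).verts - 3 := by
        simpa using (hT.sparse_of_balanced _
          (Subgraph.isSubgraph_inf_left.balanced hQ.1)).card_edges_le
          (show 1 ≤ #(B ⊓ T).edges by omega)
      omega
    have hV : #(B ⊓ T).verts ≤ 1 := by omega
    exact ⟨hQ, Finset.eq_singleton_iff_unique_mem.2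
      ⟨hI₂, fun a ha => Finset.card_le_one.1 hV a ha v₂ hI₂⟩, Finset.card_eq_zero.1 hE⟩

lemma false_of_tight (S : TwoNeighbourStar G v₀ v₁ v₂ e₁ e₂ e₃) (hT : PMTight G m)
    (hg : g₁ ≠ g₂) (hT₀ : v₀ ∉ T.verts) (hT₂ : v₂ ∈ T.verts)
    (hTc : 2 * (#T.verts : ℤ) - 1 ≤ #T.edges) (hB₁ : Obstructs m v₁ v₂ g₁ B₁)
    (h₀₁ : v₀ ∉ B₁.verts) (hB₂ : Obstructs m v₁ v₂ g₂ B₂) (h₀₂ : v₀ ∉ B₂.verts) : False := by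
  obtain ⟨hQ₁, hV₁, hE₁⟩ := S.balancedObstruction_of_tight hT hT₀ hT₂ hTc hB₁ h₀₁
  obtain ⟨hQ₂, hV₂, hE₂⟩ := S.balancedObstruction_of_tight hT hT₀ hT₂ hTc hB₂ h₀₂
  have hUV : ((B₁ ⊔ B₂) ⊓ T).verts = {v₂} := by
    simp only [Subgraph.inf_verts, Subgraph.sup_verts] at hV₁ hV₂ ⊢
    rw [Finset.union_inter_distrib_right, hV₁, hV₂, Finset.union_self]
  have hUE : ((B₁ ⊔ B₂) ⊓ T).edges = ∅ := by
    simp only [Subgraph.inf_edges, Subgraph.sup_edges] at hE₁ hE₂ ⊢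
    rw [Finset.union_inter_distrib_right, hE₁, hE₂, Finset.union_self]
  have hk := S.card_inf_of_tight hT hT₀ hTc (D := B₁ ⊔ B₂) (by simp [h₀₁, h₀₂])
    (Finset.mem_union_left _ hB₁.left_mem) (Finset.mem_union_left _ hB₁.right_mem)
  rw [hUV, hUE, Finset.card_singleton, Finset.card_empty] at hk
  have hsp : Sparse 2 2 (B₁ ⊓ B₂).coe :=
    (hT.sparse_of_balanced _ (Subgraph.isSubgraph_inf_left.balanced hQ₁.1)).of_le (by norm_num)
  have := Subgraph.card_edges_le_of_not_reachable hsp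
    (Finset.mem_inter.2 ⟨hB₁.left_mem, hB₂.left_mem⟩)
    (Finset.mem_inter.2 ⟨hB₁.right_mem, hB₂.right_mem⟩) (hQ₁.not_reachable_inf hQ₂ hg)
  have := Subgraph.card_verts_sup_add_inf (X := B₁) (Y := B₂)
  have := Subgraph.card_edges_sup_add_inf (X := B₁) (Y := B₂)
  have := hQ₁.2.1
  have := hQ₂.2.1
  omega

lemma false_of_obstructs (S : TwoNeighbourStar G v₀ v₁ v₂ e₁ e₂ e₃) (hT : PMTight G m)
    (hB₁ : Obstructs m v₁ v₂ ((gainFrom G m v₀ e₁)⁻¹ * gainFrom G m v₀ e₂) B₁)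
    (h₀₁ : v₀ ∉ B₁.verts)
    (hB₂ : Obstructs m v₁ v₂ ((gainFrom G m v₀ e₁)⁻¹ * gainFrom G m v₀ e₃) B₂)
    (h₀₂ : v₀ ∉ B₂.verts)
    (hL : Obstructs m v₂ v₂ ((gainFrom G m v₀ e₂)⁻¹ * gainFrom G m v₀ e₃) T)
    (h₀ : v₀ ∉ T.verts) : False := by
  have hne := S.gainFrom_ne hT
  have hg : (gainFrom G m v₀ e₁)⁻¹ * gainFrom G m v₀ e₂ ≠
      (gainFrom G m v₀ e₁)⁻¹ * gainFrom G m v₀ e₃ := fun h => hne (mul_left_cancel h)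
  -- the empty walk at `v₂` pins down the gain of the loop
  rcases hL.kind with hc | ⟨-, -, hr⟩ | ⟨-, -, hb⟩
  · exact S.false_of_tight hT hg h₀ hL.left_mem hc hB₁ h₀₁ hB₂ h₀₂
  · have hr : (m e₂).r = (m e₃).r := by simpa [gainFrom_r] using hr [] rfl
    exact S.false_of_r_eq hT hr hg (by simp [gainFrom_r]) (by simp [gainFrom_r, hr])
      hB₁ h₀₁ hB₂ h₀₂
  · exact hne (inv_mul_eq_one.1 (hb [] rfl).symm)

end TwoNeighbourStar

theorem twoNeighbour_reduction_general {α β : Type} [DecidableEq α] [DecidableEq β]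
    (G : Multigraph α β) (m : β → PM) (hT : PMTight G m)
    (v₀ v₁ v₂ : α) (h01 : v₁ ≠ v₀) (h02 : v₂ ≠ v₀) (h12 : v₁ ≠ v₂)
    (hdeg : G.degree v₀ = 3)
    (e₁ e₂ e₃ : β) (he12 : e₁ ≠ e₂) (he13 : e₁ ≠ e₃) (he23 : e₂ ≠ e₃)
    (hm₁ : e₁ ∈ G.edges) (hm₂ : e₂ ∈ G.edges) (hm₃ : e₃ ∈ G.edges)
    (hi₁ : G.fst e₁ = v₀ ∨ G.snd e₁ = v₀) (ho₁ : otherEnd G v₀ e₁ = v₁)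
    (hi₂ : G.fst e₂ = v₀ ∨ G.snd e₂ = v₀) (ho₂ : otherEnd G v₀ e₂ = v₂)
    (hi₃ : G.fst e₃ = v₀ ∨ G.snd e₃ = v₀) (ho₃ : otherEnd G v₀ e₃ = v₂) :
    ∃ i j : Fin 3, i ≠ j ∧
      PMTight ((G.deleteVertex v₀).addEdge e₁ (![v₁, v₂, v₂] i) (![v₁, v₂, v₂] j))
        (Function.update m e₁
          ((gainFrom G m v₀ (![e₁, e₂, e₃] i))⁻¹ * gainFrom G m v₀ (![e₁, e₂, e₃] j))) := by
  have S : TwoNeighbourStar G v₀ v₁ v₂ e₁ e₂ e₃ :=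
    ⟨h01, h02, h12, he12, he13, he23, joins_of_otherEnd hi₁ ho₁, joins_of_otherEnd hi₂ ho₂,
      joins_of_otherEnd hi₃ ho₃,
      G.incident_eq_of_degree_eq_three hdeg he12 he13 he23 hm₁ hm₂ hm₃ hi₁ hi₂ hi₃⟩
  obtain ⟨-, hv₁, hv₂⟩ := S.mem_verts
  by_contra! hfail
  obtain ⟨B₁, h₀₁, hB₁⟩ := S.exists_obstructs hT hv₁ h01 hv₂ h02 (hfail 0 1 (by decide))
  obtain ⟨B₂, h₀₂, hB₂⟩ := S.exists_obstructs hT hv₁ h01 hv₂ h02 (hfail 0 2 (by decide))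
  obtain ⟨T, h₀, hL⟩ := S.exists_obstructs hT hv₂ h02 hv₂ h02 (hfail 1 2 (by decide))
  exact S.false_of_obstructs hT hB₁ h₀₁ hB₂ h₀₂ hL h₀

/-- A degree-3 vertex with exactly two distinct neighbours admits
a gained 1-reduction preserving `ℤ²⋊𝒞ₛ`-tightness. -/
theorem twoNeighbour_reduction {α β : Type} [DecidableEq α] [DecidableEq β]
    (G : Multigraph α β) (m : β → PM) (hGm : IsGainGraph G m) (hT : PMTight G m)
    (v₀ v₁ v₂ : α) (h01 : v₁ ≠ v₀) (h02 : v₂ ≠ v₀) (h12 : v₁ ≠ v₂)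
    (hv₀ : v₀ ∈ G.verts) (hdeg : G.degree v₀ = 3)
    (e₁ e₂ e₃ : β) (he12 : e₁ ≠ e₂) (he13 : e₁ ≠ e₃) (he23 : e₂ ≠ e₃)
    (hm₁ : e₁ ∈ G.edges) (hm₂ : e₂ ∈ G.edges) (hm₃ : e₃ ∈ G.edges)
    (hi₁ : G.fst e₁ = v₀ ∨ G.snd e₁ = v₀) (ho₁ : otherEnd G v₀ e₁ = v₁)
    (hi₂ : G.fst e₂ = v₀ ∨ G.snd e₂ = v₀) (ho₂ : otherEnd G v₀ e₂ = v₂)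
    (hi₃ : G.fst e₃ = v₀ ∨ G.snd e₃ = v₀) (ho₃ : otherEnd G v₀ e₃ = v₂) :
    ∃ i j : Fin 3, i ≠ j ∧
      PMTight ((G.deleteVertex v₀).addEdge e₁ (![v₁, v₂, v₂] i) (![v₁, v₂, v₂] j))
        (Function.update m e₁
          ((gainFrom G m v₀ (![e₁, e₂, e₃] i))⁻¹ * gainFrom G m v₀ (![e₁, e₂, e₃] j))) :=
  twoNeighbour_reduction_general G m hT v₀ v₁ v₂ h01 h02 h12 hdeg e₁ e₂ e₃ he12 he13 he23 hm₁ hm₂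
    hm₃ hi₁ ho₁ hi₂ ho₂ hi₃ ho₃

end Crystal
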